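/- arXiv:2102.01943 — 2 statements merged into one kernel-verified Lean document; each statement's English description precedes it below -/
import Mathlib

section
/- There exists a constant C > 0 such that for all n ∈ ℕ and all Fourier frequencies λ_{j,n} = 2πj/n, λ_{k,n} = 2πk/n one has | (1/(4π²n²)) Σ_{t1,t2,t3,t4=1}^{n} c(t1−t4, t2−t4, t3−t4) e^{−i(t1−t2)λ_{j,n} + i(t3−t4)λ_{k,n}} − (2π/n) F(λ_{j,n}, −λ_{j,n}, −λ_{k,n}) | ≤ C/n². -/
open Complex Finset
open scoped Real

/-- The fourth-order cumulant spectral density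
`F(λ,μ,η) = (2π)^{-3} Σ_{h1,h2,h3∈ℤ} c(h1,h2,h3) e^{−i(h1 λ + h2 μ + h3 η)}`. -/
noncomputable def cumSpecDens (c : ℤ × ℤ × ℤ → ℂ) (l μ η : ℝ) : ℂ :=
  ((2 * π : ℂ) ^ 3)⁻¹ *
    ∑' h : ℤ × ℤ × ℤ,
      c h * Complex.exp (-Complex.I * ((h.1 : ℂ) * (l : ℂ) + (h.2.1 : ℂ) * (μ : ℂ) +
        (h.2.2 : ℂ) * (η : ℂ)))

/-!
Substituting `h = (t₁ - t₄, t₂ - t₄, t₃ - t₄)`, the phase of each term depends on `h` only, so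
the quadruple sum is `Σ_h N_n(h) c(h) e(h)`, where `N_n(h)` counts the `t₄ ∈ [1, n]` with
`t₄ + h₁, t₄ + h₂, t₄ + h₃ ∈ [1, n]`. The term `(2π/n) F` is the same series, scaled by
`(4π²n²)⁻¹`, with `N_n(h)` replaced by `n`. Since `0 ≤ n - N_n(h) ≤ |h₁| + |h₂| + |h₃|`, the
difference is at most `(4π²n²)⁻¹ Σ_h (|h₁| + |h₂| + |h₃|) |c(h)|`.
-/

noncomputable def overlapWindow (n : ℕ) (h : ℤ × ℤ × ℤ) : Finset ℤ :=
  {t ∈ Icc (1 : ℤ) n | t + h.1 ∈ Icc (1 : ℤ) n ∧ t + h.2.1 ∈ Icc (1 : ℤ) n ∧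
    t + h.2.2 ∈ Icc (1 : ℤ) n}

def l1Norm (h : ℤ × ℤ × ℤ) : ℕ := h.1.natAbs + h.2.1.natAbs + h.2.2.natAbs

lemma card_Icc_filter_add_notMem_le (n : ℕ) (a : ℤ) :
    #{t ∈ Icc (1 : ℤ) n | t + a ∉ Icc (1 : ℤ) n} ≤ a.natAbs := by
  have hsub : {t ∈ Icc (1 : ℤ) n | t + a ∉ Icc (1 : ℤ) n} ⊆ Ico 1 (1 - a) ∪ Ioc (n - a) n := by
    intro t
    simp only [mem_filter, mem_Icc, mem_union, mem_Ico, mem_Ioc]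
    omega
  calc _ ≤ #(Ico 1 (1 - a) ∪ Ioc (n - a) (n : ℤ)) := card_le_card hsub
    _ ≤ #(Ico 1 (1 - a)) + #(Ioc (n - a) (n : ℤ)) := card_union_le _ _
    _ ≤ a.natAbs := by rw [Int.card_Ico, Int.card_Ioc]; omega

lemma card_overlapWindow_le (n : ℕ) (h : ℤ × ℤ × ℤ) : #(overlapWindow n h) ≤ n :=
  (card_filter_le _ _).trans (by simp)

lemma le_card_overlapWindow_add_l1Norm (n : ℕ) (h : ℤ × ℤ × ℤ) :
    n ≤ #(overlapWindow n h) + l1Norm h := by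
  set A := {t ∈ Icc (1 : ℤ) n | t + h.1 ∉ Icc (1 : ℤ) n}
  set B := {t ∈ Icc (1 : ℤ) n | t + h.2.1 ∉ Icc (1 : ℤ) n}
  set C := {t ∈ Icc (1 : ℤ) n | t + h.2.2 ∉ Icc (1 : ℤ) n}
  have hcover : Icc (1 : ℤ) n ⊆ overlapWindow n h ∪ A ∪ B ∪ C := by
    intro t ht
    simp only [overlapWindow, A, B, C, mem_union, mem_filter]
    tauto
  have hcard := card_le_card hcover
  have h₃ := card_union_le (overlapWindow n h ∪ A ∪ B) C
  have h₂ := card_union_le (overlapWindow n h ∪ A) B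
  have h₁ := card_union_le (overlapWindow n h) A
  have hA : #A ≤ h.1.natAbs := card_Icc_filter_add_notMem_le n h.1
  have hB : #B ≤ h.2.1.natAbs := card_Icc_filter_add_notMem_le n h.2.1
  have hC : #C ≤ h.2.2.natAbs := card_Icc_filter_add_notMem_le n h.2.2
  simp only [Int.card_Icc] at hcard
  unfold l1Norm
  omega

lemma norm_card_overlapWindow_nsmul_sub_le {E : Type*} [SeminormedAddCommGroup E]
    (n : ℕ) (h : ℤ × ℤ × ℤ) (x : E) :
    ‖#(overlapWindow n h) • x - n • x‖ ≤ l1Norm h * ‖x‖ := by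
  have hsplit : n • x = #(overlapWindow n h) • x + (n - #(overlapWindow n h)) • x := by
    rw [← add_nsmul, Nat.add_sub_cancel' (card_overlapWindow_le n h)]
  rw [hsplit, sub_add_cancel_left, norm_neg]
  refine norm_nsmul_le.trans (mul_le_mul_of_nonneg_right ?_ (norm_nonneg x))
  exact_mod_cast Nat.sub_le_iff_le_add'.mpr (le_card_overlapWindow_add_l1Norm n h)

lemma norm_tsum_card_overlapWindow_nsmul_sub_le {E : Type*} [NormedAddCommGroup E]
    [CompleteSpace E] {f : ℤ × ℤ × ℤ → E} (hf : Summable fun h => ‖f h‖)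
    (hlf : Summable fun h => (l1Norm h : ℝ) * ‖f h‖) (n : ℕ) :
    ‖∑' h, #(overlapWindow n h) • f h - n • ∑' h, f h‖ ≤ ∑' h, (l1Norm h : ℝ) * ‖f h‖ := by
  have hWf : Summable fun h => #(overlapWindow n h) • f h :=
    .of_norm_bounded (hf.mul_left (n : ℝ)) fun h => norm_nsmul_le.trans <|
      mul_le_mul_of_nonneg_right (by exact_mod_cast card_overlapWindow_le n h) (norm_nonneg _)
  have hnf : Summable fun h => n • f h := (hf.of_norm).nsmul n
  have hbound := norm_card_overlapWindow_nsmul_sub_le (E := E) n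
  rw [← (hf.of_norm).tsum_const_smul, ← hWf.tsum_sub hnf]
  refine (norm_tsum_le_tsum_norm ?_).trans (Summable.tsum_le_tsum (fun h => hbound h _) ?_ hlf)
  all_goals exact .of_nonneg_of_le (fun _ => norm_nonneg _) (fun h => hbound h _) hlf

lemma sum_Icc_sub_eq_tsum_card_overlapWindow_nsmul {M : Type*} [AddCommMonoid M]
    [TopologicalSpace M] (n : ℕ) (g : ℤ × ℤ × ℤ → M) :
    ∑ t1 ∈ Icc (1 : ℤ) n, ∑ t2 ∈ Icc (1 : ℤ) n, ∑ t3 ∈ Icc (1 : ℤ) n, ∑ t4 ∈ Icc (1 : ℤ) n,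
      g (t1 - t4, t2 - t4, t3 - t4) = ∑' h, #(overlapWindow n h) • g h := by
  classical
  set s := Icc (1 : ℤ) n ×ˢ Icc (1 : ℤ) n ×ˢ Icc (1 : ℤ) n ×ˢ Icc (1 : ℤ) n
  set φ : ℤ × ℤ × ℤ × ℤ → ℤ × ℤ × ℤ := fun p =>
    (p.1 - p.2.2.2, p.2.1 - p.2.2.2, p.2.2.1 - p.2.2.2)
  have hfiber (h : ℤ × ℤ × ℤ) : #{p ∈ s | φ p = h} = #(overlapWindow n h) := by
    refine card_nbij' (fun p => p.2.2.2) (fun t => (t + h.1, t + h.2.1, t + h.2.2, t))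
      ?_ ?_ ?_ ?_
    all_goals
      intro p hp
      simp_all [s, φ, overlapWindow, Prod.ext_iff]
    all_goals omega
  have hout (h : ℤ × ℤ × ℤ) (hh : h ∉ s.image φ) : #(overlapWindow n h) • g h = 0 := by
    rw [← hfiber, filter_eq_empty_iff.mpr fun p hp hph => hh (mem_image.mpr ⟨p, hp, hph⟩)]
    simp
  rw [tsum_eq_sum hout, ← sum_congr rfl fun h _ => congrArg (· • g h) (hfiber h),
    ← sum_comp (fun h => g h) φ]
  simp only [s, φ, sum_product]

lemma norm_cumulantQuadSum_sub_cumSpecDens_le (c : ℤ × ℤ × ℤ → ℂ)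
    (hc₀ : Summable fun h => ‖c h‖) (hc₁ : Summable fun h => (l1Norm h : ℝ) * ‖c h‖)
    {n : ℕ} (hn : 0 < n) (L K : ℝ) :
    ‖(1 / (4 * (π : ℂ) ^ 2 * (n : ℂ) ^ 2)) *
        (∑ t1 ∈ Icc (1 : ℤ) n, ∑ t2 ∈ Icc (1 : ℤ) n, ∑ t3 ∈ Icc (1 : ℤ) n, ∑ t4 ∈ Icc (1 : ℤ) n,
          c (t1 - t4, t2 - t4, t3 - t4) *
            exp (-I * ((t1 : ℂ) - (t2 : ℂ)) * (L : ℂ) + I * ((t3 : ℂ) - (t4 : ℂ)) * (K : ℂ))) -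
      (2 * (π : ℂ) / (n : ℂ)) * cumSpecDens c L (-L) (-K)‖
      ≤ (∑' h, (l1Norm h : ℝ) * ‖c h‖) / (4 * π ^ 2) / (n : ℝ) ^ 2 := by
  set g : ℤ × ℤ × ℤ → ℂ := fun h => c h * exp (((h.2.2 * K - (h.1 - h.2.1) * L : ℝ) : ℂ) * I)
  have hg (h : ℤ × ℤ × ℤ) : ‖g h‖ = ‖c h‖ := by
    rw [norm_mul, norm_exp_ofReal_mul_I, mul_one]
  have hsum : ∑ t1 ∈ Icc (1 : ℤ) n, ∑ t2 ∈ Icc (1 : ℤ) n, ∑ t3 ∈ Icc (1 : ℤ) n,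
      ∑ t4 ∈ Icc (1 : ℤ) n, c (t1 - t4, t2 - t4, t3 - t4) *
        exp (-I * ((t1 : ℂ) - (t2 : ℂ)) * (L : ℂ) + I * ((t3 : ℂ) - (t4 : ℂ)) * (K : ℂ)) =
      ∑' h, #(overlapWindow n h) • g h := by
    rw [← sum_Icc_sub_eq_tsum_card_overlapWindow_nsmul]
    refine sum_congr rfl fun t1 _ => sum_congr rfl fun t2 _ => sum_congr rfl fun t3 _ =>
      sum_congr rfl fun t4 _ => ?_
    simp only [g]
    congr 2
    push_cast
    ring
  have hF : (2 * (π : ℂ) / (n : ℂ)) * cumSpecDens c L (-L) (-K) =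
      (1 / (4 * (π : ℂ) ^ 2 * (n : ℂ) ^ 2)) * (n • ∑' h, g h) := by
    have hexp : cumSpecDens c L (-L) (-K) = ((2 * π : ℂ) ^ 3)⁻¹ * ∑' h, g h := by
      refine congrArg _ (tsum_congr fun h => ?_)
      simp only [g]
      congr 2
      push_cast
      ring
    have hn' : (n : ℂ) ≠ 0 := by exact_mod_cast hn.ne'
    rw [hexp, nsmul_eq_mul]
    field_simp
    ring
  have hnorm : ‖(1 / (4 * (π : ℂ) ^ 2 * (n : ℂ) ^ 2))‖ = 1 / (4 * π ^ 2 * (n : ℝ) ^ 2) := by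
    simp [abs_of_pos Real.pi_pos]
  have hcore := norm_tsum_card_overlapWindow_nsmul_sub_le (f := g) (by simpa only [hg] using hc₀)
    (by simpa only [hg] using hc₁) n
  simp only [hg] at hcore
  rw [hsum, hF, ← mul_sub, norm_mul, hnorm]
  calc _ ≤ 1 / (4 * π ^ 2 * (n : ℝ) ^ 2) * ∑' h, (l1Norm h : ℝ) * ‖c h‖ := by gcongr
    _ = _ := by ring

/-- if `Σ (1+|h1|+|h2|+|h3|)|c(h1,h2,h3)| < ∞`, then there is a constant
`C > 0` such that for all `n` and all Fourier frequencies `λ_{j,n} = 2πj/n`,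
`λ_{k,n} = 2πk/n`,
`|(1/(4π²n²)) Σ_{t1,t2,t3,t4=1}^{n} c(t1−t4,t2−t4,t3−t4)
    e^{−i(t1−t2)λ_{j,n} + i(t3−t4)λ_{k,n}} − (2π/n) F(λ_{j,n},−λ_{j,n},−λ_{k,n})| ≤ C/n²`. -/
theorem cumulant_sum_approx (c : ℤ × ℤ × ℤ → ℂ)
    (hc : Summable fun h : ℤ × ℤ × ℤ =>
      (1 + |h.1| + |h.2.1| + |h.2.2| : ℝ) * ‖c h‖) :
    ∃ C > (0 : ℝ), ∀ n : ℕ, 0 < n → ∀ j k : ℤ,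
      ‖(1 / (4 * (π : ℂ) ^ 2 * (n : ℂ) ^ 2)) *
          (∑ t1 ∈ Finset.Icc (1 : ℤ) n, ∑ t2 ∈ Finset.Icc (1 : ℤ) n,
            ∑ t3 ∈ Finset.Icc (1 : ℤ) n, ∑ t4 ∈ Finset.Icc (1 : ℤ) n,
              c (t1 - t4, t2 - t4, t3 - t4) *
                Complex.exp (-Complex.I * ((t1 : ℂ) - (t2 : ℂ)) * ((2 * π * j / n : ℝ) : ℂ) +
                  Complex.I * ((t3 : ℂ) - (t4 : ℂ)) * ((2 * π * k / n : ℝ) : ℂ))) -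
        (2 * (π : ℂ) / (n : ℂ)) *
          cumSpecDens c (2 * π * j / n) (-(2 * π * j / n)) (-(2 * π * k / n))‖
        ≤ C / (n : ℝ) ^ 2 := by
  have hweight (h : ℤ × ℤ × ℤ) : (1 + |h.1| + |h.2.1| + |h.2.2| : ℝ) = 1 + l1Norm h := by
    simp only [l1Norm, Nat.cast_add, Nat.cast_natAbs]
    ring
  have hc₀ : Summable fun h => ‖c h‖ :=
    hc.of_nonneg_of_le (fun _ => norm_nonneg _) fun h => by
      rw [hweight]; exact le_mul_of_one_le_left (norm_nonneg _) (by simp)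
  have hc₁ : Summable fun h => (l1Norm h : ℝ) * ‖c h‖ :=
    hc.of_nonneg_of_le (fun _ => by positivity) fun h => by
      rw [hweight]; gcongr; simp
  set B := ∑' h, (l1Norm h : ℝ) * ‖c h‖
  have hB : 0 ≤ B := tsum_nonneg fun _ => by positivity
  refine ⟨B / (4 * π ^ 2) + 1, by positivity, fun n hn j k => ?_⟩
  calc _ ≤ B / (4 * π ^ 2) / (n : ℝ) ^ 2 :=
        norm_cumulantQuadSum_sub_cumSpecDens_le c hc₀ hc₁ hn _ _
    _ ≤ _ := by gcongr; linarith
end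

section
/- For the bivariate moving average process X(t) = e(t) + B e(t−1) with B = [[1,1],[1,−1]], where (e_1(t)) and (e_2(t)) are independent univariate i.i.d. sequences with E(e_j(t)) = 0, E(e_j(t)²) = 1 and E(e_j(t)⁴) = η_j, one has ρ_12(0) = 0, and the limiting variance of √n(ρ̂_12(0) − ρ_12(0)) simplifies to τ² = ρ_11(0)ρ_22(0) + 2ρ_11(1)ρ_22(1) + 2ρ_12(1)ρ_21(1) + Σ_{j∈ℤ} c_{1212}(j,j,0)/(γ_11(0)γ_22(0)) = 1 + (η_1 − 3)/9 + (η_2 − 3)/9. -/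
/-!
`X` is a finite linear form in the independent innovations `e_j(t)`. Its covariances are thus inner
products of coefficient vectors, and by Isserlis' formula its joint fourth cumulants only see the
innovations shared by all four factors, each weighted by its own fourth cumulant `η_j - 3`.
For `X(t) = e(t) + B e(t-1)` this gives `Γ(0) = I + B Bᵀ = 3 I`, `Γ(1) = B`, `Γ(-1) = Bᵀ = B` and
`Γ(h) = 0` for `|h| ≥ 2`; in particular `ρ_12(0) = 0`, which kills every correction term of `τ²`.
The cumulant `c_1212(j, j, 0)` vanishes unless `j = 0`, where the common innovations are
`e_1(-1)` and `e_2(-1)`, entering `X_1(0)` and `X_2(0)` with coefficients `1, 1` and `1, -1`; hence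
`c_1212(0, 0, 0) = (η_1 - 3) + (η_2 - 3)` and `γ_11(0) γ_22(0) = 9`.
-/

open MeasureTheory ProbabilityTheory Finset
open scoped Real ENNReal

noncomputable section

instance : ENNReal.HolderTriple 4 4 2 :=
  ⟨by rw [show (4 : ℝ≥0∞) = 2 * 2 by norm_num, ENNReal.mul_inv (by simp) (by simp), ← mul_add,
    ENNReal.inv_two_add_inv_two, mul_one]⟩

structure IsStdIndepFamily {Ω ι : Type*} [MeasurableSpace Ω] (ξ : ι → Ω → ℝ) (P : Measure Ω) :
    Prop where
  memLp : ∀ k, MemLp (ξ k) 4 P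
  indep : iIndepFun ξ P
  integral_eq_zero : ∀ k, ∫ ω, ξ k ω ∂P = 0
  integral_sq : ∀ k, ∫ ω, ξ k ω ^ 2 ∂P = 1

lemma integral_sum_mul_sum {Ω α β : Type*} [MeasurableSpace Ω] {P : Measure Ω}
    [Fintype α] [Fintype β] {f : α → Ω → ℝ} {g : β → Ω → ℝ} (a : α → ℝ) (b : β → ℝ)
    (hfg : ∀ p q, Integrable (fun ω ↦ f p ω * g q ω) P) :
    ∫ ω, (∑ p, a p * f p ω) * (∑ q, b q * g q ω) ∂P =
      ∑ p, ∑ q, a p * b q * ∫ ω, f p ω * g q ω ∂P := by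
  have hint (p q) : Integrable (fun ω ↦ a p * b q * (f p ω * g q ω)) P := (hfg p q).const_mul _
  simp_rw [sum_mul_sum, ← integral_const_mul]
  rw [integral_finsetSum _ fun p _ ↦ integrable_finsetSum _ fun q _ ↦
    (hint p q).congr (.of_forall fun ω ↦ by ring)]
  refine sum_congr rfl fun p _ ↦ ?_
  rw [integral_finsetSum _ fun q _ ↦ (hint p q).congr (.of_forall fun ω ↦ by ring)]
  exact sum_congr rfl fun q _ ↦ congrArg _ (funext fun ω ↦ by ring)

lemma tsum_int_eq_of_two_le_natAbs {M : Type*} [AddCommMonoid M] [TopologicalSpace M] {f : ℤ → M}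
    (hf : ∀ j, 2 ≤ j.natAbs → f j = 0) : ∑' j, f j = f (-1) + f 0 + f 1 := by
  rw [tsum_eq_sum (s := {-1, 0, 1}) fun j hj ↦
    hf j (by simp only [mem_insert, mem_singleton] at hj; omega)]
  simp [add_assoc]

def linComb {Ω ι α : Type*} [Fintype α] (ξ : ι → Ω → ℝ) (a : α → ℝ) (u : α → ι) (ω : Ω) : ℝ :=
  ∑ p, a p * ξ (u p) ω

namespace IsStdIndepFamily

variable {Ω ι : Type*} [MeasurableSpace Ω] {P : Measure Ω} {ξ : ι → Ω → ℝ}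

lemma memLp_mul (hξ : IsStdIndepFamily ξ P) (k l : ι) :
    MemLp (fun ω ↦ ξ k ω * ξ l ω) 2 P :=
  (hξ.memLp l).mul' (hξ.memLp k)

lemma integrable_mul [IsFiniteMeasure P] (hξ : IsStdIndepFamily ξ P) (k l : ι) :
    Integrable (fun ω ↦ ξ k ω * ξ l ω) P :=
  (hξ.memLp_mul k l).integrable one_le_two

lemma integrable_mul_mul_mul (hξ : IsStdIndepFamily ξ P) (k l m n : ι) :
    Integrable (fun ω ↦ ξ k ω * ξ l ω * ξ m ω * ξ n ω) P := by
  have h : MemLp (fun ω ↦ ξ k ω * ξ l ω * (ξ m ω * ξ n ω)) 1 P :=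
    (hξ.memLp_mul m n).mul' (hξ.memLp_mul k l)
  simpa only [mul_assoc] using memLp_one_iff_integrable.mp h

lemma integral_mul [DecidableEq ι] (hξ : IsStdIndepFamily ξ P) (k l : ι) :
    ∫ ω, ξ k ω * ξ l ω ∂P = if k = l then 1 else 0 := by
  split_ifs with h
  · subst h
    simpa only [sq] using hξ.integral_sq k
  · rw [(hξ.indep.indepFun h).integral_fun_mul_eq_mul_integral (hξ.memLp k).1 (hξ.memLp l).1]
    simp [hξ.integral_eq_zero]

lemma integral_sq_mul_sq (hξ : IsStdIndepFamily ξ P) {k l : ι} (h : k ≠ l) :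
    ∫ ω, ξ k ω ^ 2 * ξ l ω ^ 2 ∂P = 1 := by
  have hsq : Measurable fun x : ℝ ↦ x ^ 2 := by fun_prop
  have := ((hξ.indep.indepFun h).comp hsq hsq).integral_fun_mul_eq_mul_integral
    ((hξ.memLp k).1.pow 2) ((hξ.memLp l).1.pow 2)
  simpa only [Function.comp_apply, hξ.integral_sq, one_mul] using this

lemma integral_mul_mul_mul_eq_zero (hξ : IsStdIndepFamily ξ P) {k l m n : ι}
    (hk : n ≠ k) (hl : n ≠ l) (hm : n ≠ m) :
    ∫ ω, ξ k ω * ξ l ω * ξ m ω * ξ n ω ∂P = 0 := by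
  classical
  have hdisj : Disjoint ({k, l, m} : Finset ι) {n} := by simpa using ⟨hk, hl, hm⟩
  have hind := hξ.indep.indepFun_finset₀ _ _ hdisj fun i ↦ (hξ.memLp i).1.aemeasurable
  have hφ : Measurable fun v : ({k, l, m} : Finset ι) → ℝ ↦
      v ⟨k, by simp⟩ * v ⟨l, by simp⟩ * v ⟨m, by simp⟩ := by fun_prop
  have hψ : Measurable fun v : ({n} : Finset ι) → ℝ ↦ v ⟨n, by simp⟩ := by fun_prop
  have := (hind.comp hφ hψ).integral_fun_mul_eq_mul_integral
    (((hξ.memLp k).1.mul (hξ.memLp l).1).mul (hξ.memLp m).1) (hξ.memLp n).1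
  simpa only [Function.comp_apply, hξ.integral_eq_zero, mul_zero] using this

lemma integral_mul_mul_mul_eq_zero_of_isolated (hξ : IsStdIndepFamily ξ P) {k l m n : ι}
    (h : (k ≠ l ∧ k ≠ m ∧ k ≠ n) ∨ (l ≠ k ∧ l ≠ m ∧ l ≠ n) ∨ (m ≠ k ∧ m ≠ l ∧ m ≠ n) ∨
      (n ≠ k ∧ n ≠ l ∧ n ≠ m)) :
    ∫ ω, ξ k ω * ξ l ω * ξ m ω * ξ n ω ∂P = 0 := by
  rcases h with ⟨h₁, h₂, h₃⟩ | ⟨h₁, h₂, h₃⟩ | ⟨h₁, h₂, h₃⟩ | ⟨h₁, h₂, h₃⟩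
  · rw [← hξ.integral_mul_mul_mul_eq_zero h₁ h₂ h₃]; congr 1; ext ω; ring
  · rw [← hξ.integral_mul_mul_mul_eq_zero h₁ h₂ h₃]; congr 1; ext ω; ring
  · rw [← hξ.integral_mul_mul_mul_eq_zero h₁ h₂ h₃]; congr 1; ext ω; ring
  · exact hξ.integral_mul_mul_mul_eq_zero h₁ h₂ h₃

/-- Isserlis' formula, corrected by the fourth cumulant `E ξ⁴ - 3` on the diagonal. -/
theorem integral_mul_mul_mul_mul [DecidableEq ι] (hξ : IsStdIndepFamily ξ P) (k l m n : ι) :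
    ∫ ω, ξ k ω * ξ l ω * ξ m ω * ξ n ω ∂P =
      (if k = l then 1 else 0) * (if m = n then 1 else 0) +
      (if k = m then 1 else 0) * (if l = n then 1 else 0) +
      (if k = n then 1 else 0) * (if l = m then 1 else 0) +
      if k = l ∧ l = m ∧ m = n then ∫ ω, ξ k ω ^ 4 ∂P - 3 else 0 := by
  have reorder {f g : Ω → ℝ} (h : ∀ ω, f ω = g ω) : ∫ ω, f ω ∂P = ∫ ω, g ω ∂P :=
    congrArg _ (funext h)
  have pairs {a b : ι} (h : a ≠ b) : ∫ ω, ξ a ω * ξ a ω * ξ b ω * ξ b ω ∂P = 1 := by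
    rw [← hξ.integral_sq_mul_sq h]; exact reorder fun ω ↦ by ring
  by_cases hiso : (k ≠ l ∧ k ≠ m ∧ k ≠ n) ∨ (l ≠ k ∧ l ≠ m ∧ l ≠ n) ∨
      (m ≠ k ∧ m ≠ l ∧ m ≠ n) ∨ (n ≠ k ∧ n ≠ l ∧ n ≠ m)
  · rw [hξ.integral_mul_mul_mul_eq_zero_of_isolated hiso]
    grind
  -- no index is isolated, so the indices coincide in pairs
  rcases eq_or_ne k l with rfl | hkl
  · obtain rfl : m = n := by grind
    rcases eq_or_ne k m with rfl | hkm
    · rw [reorder fun ω ↦ show ξ k ω * ξ k ω * ξ k ω * ξ k ω = ξ k ω ^ 4 by ring]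
      simp only [if_true, and_self]
      ring
    · simp [pairs hkm, hkm]
  rcases eq_or_ne k m with rfl | hkm
  · obtain rfl : l = n := by grind
    rw [reorder fun ω ↦ show ξ k ω * ξ l ω * ξ k ω * ξ l ω = ξ k ω * ξ k ω * ξ l ω * ξ l ω
      by ring, pairs hkl]
    simp [hkl]
  · obtain rfl : k = n := by grind
    obtain rfl : l = m := by grind
    rw [reorder fun ω ↦ show ξ k ω * ξ l ω * ξ l ω * ξ k ω = ξ k ω * ξ k ω * ξ l ω * ξ l ω
      by ring, pairs hkl]
    simp [hkl]

variable {α : Type*} [Fintype α]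

lemma integral_linComb_mul [IsFiniteMeasure P] [DecidableEq ι] (hξ : IsStdIndepFamily ξ P)
    (a b : α → ℝ) (u v : α → ι) :
    ∫ ω, linComb ξ a u ω * linComb ξ b v ω ∂P =
      ∑ p, ∑ q, a p * b q * if u p = v q then 1 else 0 := by
  simp only [linComb, integral_sum_mul_sum a b fun p q ↦ hξ.integrable_mul (u p) (v q),
    hξ.integral_mul]

lemma integral_linComb_mul_mul_mul (hξ : IsStdIndepFamily ξ P) (a b c d : α → ℝ)
    (u v w x : α → ι) :
    ∫ ω, linComb ξ a u ω * linComb ξ b v ω * linComb ξ c w ω * linComb ξ d x ω ∂P =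
      ∑ p, ∑ q, ∑ r, ∑ s, a p * b q * c r * d s *
        ∫ ω, ξ (u p) ω * ξ (v q) ω * ξ (w r) ω * ξ (x s) ω ∂P := by
  have pair (a b : α → ℝ) (u v : α → ι) (ω : Ω) :
      linComb ξ a u ω * linComb ξ b v ω =
        ∑ pq : α × α, a pq.1 * b pq.2 * (ξ (u pq.1) ω * ξ (v pq.2) ω) := by
    rw [linComb, linComb, sum_mul_sum, Fintype.sum_prod_type]
    exact sum_congr rfl fun p _ ↦ sum_congr rfl fun q _ ↦ by ring
  simp_rw [mul_assoc _ (linComb ξ c w _), pair]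
  rw [integral_sum_mul_sum _ _ fun pq rs ↦ (hξ.integrable_mul_mul_mul (u pq.1) (v pq.2)
    (w rs.1) (x rs.2)).congr (.of_forall fun ω ↦ by simp only; ring)]
  simp only [Fintype.sum_prod_type, mul_assoc]

/-- The joint fourth cumulant of four linear forms in `ξ` only sees the diagonal. -/
theorem integral_linComb_mul_mul_mul_sub [IsFiniteMeasure P] [DecidableEq ι]
    (hξ : IsStdIndepFamily ξ P) (a b c d : α → ℝ) (u v w x : α → ι) :
    ∫ ω, linComb ξ a u ω * linComb ξ b v ω * linComb ξ c w ω * linComb ξ d x ω ∂P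
      - (∫ ω, linComb ξ a u ω * linComb ξ b v ω ∂P) *
          (∫ ω, linComb ξ c w ω * linComb ξ d x ω ∂P)
      - (∫ ω, linComb ξ a u ω * linComb ξ c w ω ∂P) *
          (∫ ω, linComb ξ b v ω * linComb ξ d x ω ∂P)
      - (∫ ω, linComb ξ a u ω * linComb ξ d x ω ∂P) *
          (∫ ω, linComb ξ b v ω * linComb ξ c w ω ∂P) =
    ∑ p, ∑ q, ∑ r, ∑ s, a p * b q * c r * d s *
      if u p = v q ∧ v q = w r ∧ w r = x s then ∫ ω, ξ (u p) ω ^ 4 ∂P - 3 else 0 := by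
  have swap (F G : α → α → ℝ) :
      (∑ p, ∑ r, F p r) * (∑ q, ∑ s, G q s) = ∑ p, ∑ q, ∑ r, ∑ s, F p r * G q s := by
    simp_rw [sum_mul, mul_sum]
    exact sum_congr rfl fun p _ ↦ sum_comm
  have rotate (F G : α → α → ℝ) :
      (∑ p, ∑ s, F p s) * (∑ q, ∑ r, G q r) = ∑ p, ∑ q, ∑ r, ∑ s, F p s * G q r := by
    simp_rw [sum_mul, mul_sum]
    refine sum_congr rfl fun p _ ↦ ?_
    rw [sum_comm]
    exact sum_congr rfl fun q _ ↦ sum_comm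
  simp only [hξ.integral_linComb_mul_mul_mul, hξ.integral_linComb_mul,
    hξ.integral_mul_mul_mul_mul]
  rw [swap (fun p r ↦ a p * c r * if u p = w r then 1 else 0)
      (fun q s ↦ b q * d s * if v q = x s then 1 else 0),
    rotate (fun p s ↦ a p * d s * if u p = x s then 1 else 0)
      (fun q r ↦ b q * c r * if v q = w r then 1 else 0)]
  simp_rw [sum_mul, mul_sum, ← sum_sub_distrib]
  refine sum_congr rfl fun p _ ↦ sum_congr rfl fun q _ ↦ sum_congr rfl fun r _ ↦
    sum_congr rfl fun s _ ↦ ?_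
  ring

end IsStdIndepFamily

section MovingAverage

variable {Ω : Type*} [MeasurableSpace Ω] {d : ℕ}

def autocov (P : Measure Ω) (X : ℤ → Ω → Fin d → ℝ) (r s : Fin d) (h : ℤ) : ℝ :=
  ∫ ω, X h ω r * X 0 ω s ∂P

def crossCorr (P : Measure Ω) (X : ℤ → Ω → Fin d → ℝ) (r s : Fin d) (h : ℤ) : ℝ :=
  autocov P X r s h / √(autocov P X r r 0 * autocov P X s s 0)

def cumulant4 (P : Measure Ω) (X : ℤ → Ω → Fin d → ℝ) (p q r s : Fin d) (h₁ h₂ h₃ : ℤ) : ℝ :=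
  (∫ ω, X h₁ ω p * X h₂ ω q * X h₃ ω r * X 0 ω s ∂P)
    - autocov P X p q (h₁ - h₂) * autocov P X r s h₃
    - autocov P X p r (h₁ - h₃) * autocov P X q s h₂
    - autocov P X p s h₁ * autocov P X q r (h₂ - h₃)

def innovations (e : ℤ → Ω → Fin d → ℝ) (k : ℤ × Fin d) (ω : Ω) : ℝ := e k.1 ω k.2

/-- `X(t) = ∑_{j < n} Ψ_j e(t - j)`. -/
def movingAverage {n : ℕ} (Ψ : Fin n → Matrix (Fin d) (Fin d) ℝ) (e : ℤ → Ω → Fin d → ℝ)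
    (t : ℤ) (ω : Ω) (r : Fin d) : ℝ :=
  linComb (innovations e) (fun p : Fin n × Fin d ↦ Ψ p.1 r p.2)
    (fun p ↦ (t - (p.1 : ℕ), p.2)) ω

variable {P : Measure Ω} {e : ℤ → Ω → Fin d → ℝ} {n : ℕ} {Ψ : Fin n → Matrix (Fin d) (Fin d) ℝ}

lemma integral_movingAverage_mul [IsFiniteMeasure P]
    (he : IsStdIndepFamily (innovations e) P) (t t' : ℤ) (r s : Fin d) :
    ∫ ω, movingAverage Ψ e t ω r * movingAverage Ψ e t' ω s ∂P =
      ∑ p : Fin n × Fin d, ∑ q : Fin n × Fin d, Ψ p.1 r p.2 * Ψ q.1 s q.2 *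
        if t - (p.1 : ℕ) = t' - (q.1 : ℕ) ∧ p.2 = q.2 then 1 else 0 := by
  simp only [movingAverage, he.integral_linComb_mul, Prod.mk.injEq]

lemma integral_movingAverage_mul_eq_autocov [IsFiniteMeasure P]
    (he : IsStdIndepFamily (innovations e) P) (t t' : ℤ) (r s : Fin d) :
    ∫ ω, movingAverage Ψ e t ω r * movingAverage Ψ e t' ω s ∂P =
      autocov P (movingAverage Ψ e) r s (t - t') := by
  simp only [autocov, integral_movingAverage_mul he]
  refine sum_congr rfl fun p _ ↦ sum_congr rfl fun q _ ↦ ?_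
  congr 2
  apply propext
  omega

lemma autocov_movingAverage_eq_zero [IsFiniteMeasure P]
    (he : IsStdIndepFamily (innovations e) P) {r s : Fin d} {h : ℤ} (hh : n ≤ h.natAbs) :
    autocov P (movingAverage Ψ e) r s h = 0 := by
  refine (integral_movingAverage_mul he h 0 r s).trans
    (sum_eq_zero fun p _ ↦ sum_eq_zero fun q _ ↦ ?_)
  have := p.1.isLt
  have := q.1.isLt
  rw [if_neg (by omega), mul_zero]

lemma cumulant4_movingAverage [IsFiniteMeasure P] (he : IsStdIndepFamily (innovations e) P)
    (p q r s : Fin d) (h₁ h₂ h₃ : ℤ) :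
    cumulant4 P (movingAverage Ψ e) p q r s h₁ h₂ h₃ =
      ∑ a : Fin n × Fin d, ∑ b : Fin n × Fin d, ∑ c : Fin n × Fin d, ∑ f : Fin n × Fin d,
        Ψ a.1 p a.2 * Ψ b.1 q b.2 * Ψ c.1 r c.2 * Ψ f.1 s f.2 *
          if (h₁ - (a.1 : ℕ), a.2) = (h₂ - (b.1 : ℕ), b.2) ∧
              (h₂ - (b.1 : ℕ), b.2) = (h₃ - (c.1 : ℕ), c.2) ∧
              (h₃ - (c.1 : ℕ), c.2) = ((0 : ℤ) - (f.1 : ℕ), f.2)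
          then ∫ ω, e (h₁ - (a.1 : ℕ)) ω a.2 ^ 4 ∂P - 3 else 0 := by
  rw [cumulant4, ← integral_movingAverage_mul_eq_autocov he h₁ h₂,
    ← integral_movingAverage_mul_eq_autocov he h₁ h₃,
    ← integral_movingAverage_mul_eq_autocov he h₂ h₃]
  exact he.integral_linComb_mul_mul_mul_sub _ _ _ _ _ _ _ _

lemma cumulant4_movingAverage_eq_zero [IsFiniteMeasure P]
    (he : IsStdIndepFamily (innovations e) P) {p q r s : Fin d} {h₁ h₂ h₃ : ℤ}
    (hh : n ≤ h₁.natAbs) :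
    cumulant4 P (movingAverage Ψ e) p q r s h₁ h₂ h₃ = 0 := by
  rw [cumulant4_movingAverage he]
  refine sum_eq_zero fun a _ ↦ sum_eq_zero fun b _ ↦ sum_eq_zero fun c _ ↦
    sum_eq_zero fun f _ ↦ ?_
  have := a.1.isLt
  have := f.1.isLt
  rw [if_neg (by simp only [Prod.mk.injEq]; omega), mul_zero]

end MovingAverage

def ma1Coeff : Fin 2 → Matrix (Fin 2) (Fin 2) ℝ := ![1, !![1, 1; 1, -1]]

lemma movingAverage_ma1Coeff {Ω : Type*} {e : ℤ → Ω → Fin 2 → ℝ} (t : ℤ) (ω : Ω) :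
    movingAverage ma1Coeff e t ω = ![e t ω 0 + e (t - 1) ω 0 + e (t - 1) ω 1,
      e t ω 1 + e (t - 1) ω 0 - e (t - 1) ω 1] := by
  ext r
  fin_cases r <;> simp [movingAverage, linComb, innovations, ma1Coeff, Fintype.sum_prod_type] <;>
    ring

section MA1

variable {Ω : Type*} [MeasurableSpace Ω] {P : Measure Ω} [IsFiniteMeasure P]
  {e : ℤ → Ω → Fin 2 → ℝ}

lemma autocov_ma1Coeff_zero (he : IsStdIndepFamily (innovations e) P) (r s : Fin 2) :
    autocov P (movingAverage ma1Coeff e) r s 0 = if r = s then 3 else 0 := by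
  rw [autocov, integral_movingAverage_mul he]
  fin_cases r <;> fin_cases s <;> norm_num [ma1Coeff, Fintype.sum_prod_type]

lemma autocov_ma1Coeff_one (he : IsStdIndepFamily (innovations e) P) (r s : Fin 2) :
    autocov P (movingAverage ma1Coeff e) r s 1 = !![1, 1; 1, -1] r s := by
  rw [autocov, integral_movingAverage_mul he]
  fin_cases r <;> fin_cases s <;> simp [ma1Coeff, Fintype.sum_prod_type]

lemma autocov_ma1Coeff_neg_one (he : IsStdIndepFamily (innovations e) P) (r s : Fin 2) :
    autocov P (movingAverage ma1Coeff e) r s (-1) = !![1, 1; 1, -1] s r := by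
  rw [autocov, integral_movingAverage_mul he]
  fin_cases r <;> fin_cases s <;> simp [ma1Coeff, Fintype.sum_prod_type]

lemma cumulant4_ma1Coeff (he : IsStdIndepFamily (innovations e) P) {η : Fin 2 → ℝ}
    (hη : ∀ t i, ∫ ω, e t ω i ^ 4 ∂P = η i) (j : ℤ) :
    cumulant4 P (movingAverage ma1Coeff e) 0 1 0 1 j j 0 =
      if j = 0 then η 0 - 3 + (η 1 - 3) else 0 := by
  by_cases hj : 2 ≤ j.natAbs
  · rw [cumulant4_movingAverage_eq_zero he hj, if_neg (by omega)]
  obtain rfl | rfl | rfl : j = -1 ∨ j = 0 ∨ j = 1 := by omega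
  all_goals simp [cumulant4_movingAverage he, ma1Coeff, Fintype.sum_prod_type, hη]

lemma crossCorr_ma1Coeff (he : IsStdIndepFamily (innovations e) P) (r s : Fin 2) (h : ℤ) :
    crossCorr P (movingAverage ma1Coeff e) r s h =
      autocov P (movingAverage ma1Coeff e) r s h / 3 := by
  simp [crossCorr, autocov_ma1Coeff_zero he, Real.sqrt_mul_self]

lemma tsum_cumulant4_ma1Coeff_div (he : IsStdIndepFamily (innovations e) P) {η : Fin 2 → ℝ}
    (hη : ∀ t i, ∫ ω, e t ω i ^ 4 ∂P = η i) :
    ∑' j : ℤ, cumulant4 P (movingAverage ma1Coeff e) 0 1 0 1 j j 0 /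
      (autocov P (movingAverage ma1Coeff e) 0 0 0 * autocov P (movingAverage ma1Coeff e) 1 1 0) =
      (η 0 - 3) / 9 + (η 1 - 3) / 9 := by
  rw [tsum_int_eq_of_two_le_natAbs fun j hj ↦ by
    simp [cumulant4_ma1Coeff he hη, show j ≠ 0 by omega]]
  simp [cumulant4_ma1Coeff he hη, autocov_ma1Coeff_zero he]
  ring

end MA1

theorem ma1_crosscorrelation_limit_variance_general
    {Ω : Type*} [MeasurableSpace Ω] (P : Measure Ω) [IsProbabilityMeasure P]
    (e : ℤ → Ω → Fin 2 → ℝ)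
    (hmom : ∀ t j, MemLp (fun ω => e t ω j) 4 P)
    -- (e_j(t))_{t,j} are mutually independent
    (hindep : iIndepFun
      (fun (p : ℤ × Fin 2) ω => e p.1 ω p.2) P)
    (η : Fin 2 → ℝ)
    (hmean : ∀ t j, (∫ ω, e t ω j ∂P) = 0)
    (hvar : ∀ t j, (∫ ω, e t ω j ^ 2 ∂P) = 1)
    (hkurt : ∀ t j, (∫ ω, e t ω j ^ 4 ∂P) = η j)
    -- the process X(t) = e(t) + B e(t−1), B = [[1,1],[1,−1]]
    (X : ℤ → Ω → Fin 2 → ℝ)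
    (hX : ∀ t ω, X t ω = ![e t ω 0 + e (t - 1) ω 0 + e (t - 1) ω 1,
      e t ω 1 + e (t - 1) ω 0 - e (t - 1) ω 1])
    -- autocovariances, cross-correlations and fourth-order cumulants of X
    (γ : Fin 2 → Fin 2 → ℤ → ℝ)
    (hγ : ∀ r s h, γ r s h = ∫ ω, X h ω r * X 0 ω s ∂P)
    (ρ : Fin 2 → Fin 2 → ℤ → ℝ)
    (hρ : ∀ r s h, ρ r s h = γ r s h / Real.sqrt (γ r r 0 * γ s s 0))
    (c : Fin 2 → Fin 2 → Fin 2 → Fin 2 → ℤ → ℤ → ℤ → ℝ)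
    (hc : ∀ p q r s h1 h2 h3, c p q r s h1 h2 h3 =
      (∫ ω, X h1 ω p * X h2 ω q * X h3 ω r * X 0 ω s ∂P)
        - γ p q (h1 - h2) * γ r s h3 - γ p r (h1 - h3) * γ q s h2
        - γ p s h1 * γ q r (h2 - h3))
    -- τ², the limiting variance of √n(ρ̂_12(0) − ρ_12(0)) (general formula of
    -- Example 2.2 with r = 1, s = 2, h = 0)
    (τsq : ℝ)
    (hτ : τsq = ∑' j : ℤ,
      (ρ 0 0 j * ρ 1 1 j + ρ 0 1 j * ρ 1 0 j +
        c 0 1 0 1 j j 0 / (γ 0 0 0 * γ 1 1 0) +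
        (1 / 2) * ρ 0 1 0 ^ 2 * (ρ 0 0 j ^ 2 + ρ 1 1 j ^ 2 + 2 * ρ 0 1 j ^ 2) -
        2 * ρ 0 1 0 * (ρ 0 0 j * ρ 1 0 j + ρ 0 1 j * ρ 1 1 j) +
        (1 / 4) * ρ 0 1 0 ^ 2 * (c 0 0 0 0 j j 0 / γ 0 0 0 ^ 2 +
          c 1 1 1 1 j j 0 / γ 1 1 0 ^ 2 + 2 * c 0 0 1 1 j j 0 / (γ 0 0 0 * γ 1 1 0)) -
        (ρ 0 1 0 / Real.sqrt (γ 0 0 0 * γ 1 1 0)) *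
          (c 0 1 0 0 j j 0 / γ 0 0 0 + c 0 1 1 1 j j 0 / γ 1 1 0))) :
    ρ 0 1 0 = 0 ∧
    τsq = ρ 0 0 0 * ρ 1 1 0 + 2 * ρ 0 0 1 * ρ 1 1 1 + 2 * ρ 0 1 1 * ρ 1 0 1 +
      ∑' j : ℤ, c 0 1 0 1 j j 0 / (γ 0 0 0 * γ 1 1 0) ∧
    ρ 0 0 0 * ρ 1 1 0 + 2 * ρ 0 0 1 * ρ 1 1 1 + 2 * ρ 0 1 1 * ρ 1 0 1 +
      (∑' j : ℤ, c 0 1 0 1 j j 0 / (γ 0 0 0 * γ 1 1 0)) =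
      1 + (η 0 - 3) / 9 + (η 1 - 3) / 9 := by
  have he : IsStdIndepFamily (innovations e) P :=
    ⟨fun k ↦ hmom k.1 k.2, hindep, fun k ↦ hmean k.1 k.2, fun k ↦ hvar k.1 k.2⟩
  obtain rfl : X = movingAverage ma1Coeff e :=
    funext fun t ↦ funext fun ω ↦ (hX t ω).trans (movingAverage_ma1Coeff t ω).symm
  obtain rfl : γ = autocov P (movingAverage ma1Coeff e) := by
    funext r s h; exact hγ r s h
  obtain rfl : ρ = crossCorr P (movingAverage ma1Coeff e) := by
    funext r s h; exact hρ r s h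
  obtain rfl : c = cumulant4 P (movingAverage ma1Coeff e) := by
    funext p q r s h₁ h₂ h₃; exact hc p q r s h₁ h₂ h₃
  have hcum := cumulant4_ma1Coeff he hkurt
  have hρ₀ : crossCorr P (movingAverage ma1Coeff e) 0 1 0 = 0 := by
    simp [crossCorr_ma1Coeff he, autocov_ma1Coeff_zero he]
  refine ⟨hρ₀, ?_, ?_⟩
  · rw [hτ, hρ₀, tsum_cumulant4_ma1Coeff_div he hkurt, tsum_int_eq_of_two_le_natAbs fun j hj ↦ by
      simp [crossCorr_ma1Coeff he, autocov_movingAverage_eq_zero (Ψ := ma1Coeff) he hj, hcum,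
        show j ≠ 0 by omega]]
    simp [crossCorr_ma1Coeff he, autocov_ma1Coeff_zero he, autocov_ma1Coeff_one he,
      autocov_ma1Coeff_neg_one he, hcum]
    ring
  · rw [tsum_cumulant4_ma1Coeff_div he hkurt]
    simp [crossCorr_ma1Coeff he, autocov_ma1Coeff_zero he, autocov_ma1Coeff_one he]
    ring

/-- for the bivariate moving average process
`X(t) = e(t) + B e(t−1)` with `B = [[1,1],[1,−1]]` and independent i.i.d. innovation
sequences `(e_1(t))`, `(e_2(t))` with mean `0`, variance `1` and kurtosis `η_j`, one has
`ρ_12(0) = 0` and the limiting variance `τ²` of `√n(ρ̂_12(0) − ρ_12(0))` simplifies to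
`ρ_11(0)ρ_22(0) + 2ρ_11(1)ρ_22(1) + 2ρ_12(1)ρ_21(1) + Σ_j c_1212(j,j,0)/(γ_11(0)γ_22(0))
 = 1 + (η_1 − 3)/9 + (η_2 − 3)/9`. -/
theorem ma1_crosscorrelation_limit_variance
    {Ω : Type*} [MeasurableSpace Ω] (P : Measure Ω) [IsProbabilityMeasure P]
    (e : ℤ → Ω → Fin 2 → ℝ)
    (hmeas : ∀ t j, Measurable fun ω => e t ω j)
    (hmom : ∀ t j, MemLp (fun ω => e t ω j) 4 P)
    -- (e_j(t))_{t,j} are mutually independent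
    (hindep : iIndepFun
      (fun (p : ℤ × Fin 2) ω => e p.1 ω p.2) P)
    -- each sequence (e_j(t))_t is identically distributed
    (hident : ∀ t j, Measure.map (fun ω => e t ω j) P = Measure.map (fun ω => e 0 ω j) P)
    (η : Fin 2 → ℝ)
    (hmean : ∀ t j, (∫ ω, e t ω j ∂P) = 0)
    (hvar : ∀ t j, (∫ ω, e t ω j ^ 2 ∂P) = 1)
    (hkurt : ∀ t j, (∫ ω, e t ω j ^ 4 ∂P) = η j)
    -- the process X(t) = e(t) + B e(t−1), B = [[1,1],[1,−1]]
    (X : ℤ → Ω → Fin 2 → ℝ)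
    (hX : ∀ t ω, X t ω = ![e t ω 0 + e (t - 1) ω 0 + e (t - 1) ω 1,
      e t ω 1 + e (t - 1) ω 0 - e (t - 1) ω 1])
    -- autocovariances, cross-correlations and fourth-order cumulants of X
    (γ : Fin 2 → Fin 2 → ℤ → ℝ)
    (hγ : ∀ r s h, γ r s h = ∫ ω, X h ω r * X 0 ω s ∂P)
    (ρ : Fin 2 → Fin 2 → ℤ → ℝ)
    (hρ : ∀ r s h, ρ r s h = γ r s h / Real.sqrt (γ r r 0 * γ s s 0))
    (c : Fin 2 → Fin 2 → Fin 2 → Fin 2 → ℤ → ℤ → ℤ → ℝ)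
    (hc : ∀ p q r s h1 h2 h3, c p q r s h1 h2 h3 =
      (∫ ω, X h1 ω p * X h2 ω q * X h3 ω r * X 0 ω s ∂P)
        - γ p q (h1 - h2) * γ r s h3 - γ p r (h1 - h3) * γ q s h2
        - γ p s h1 * γ q r (h2 - h3))
    -- τ², the limiting variance of √n(ρ̂_12(0) − ρ_12(0)) (general formula of
    -- Example 2.2 with r = 1, s = 2, h = 0)
    (τsq : ℝ)
    (hτ : τsq = ∑' j : ℤ,
      (ρ 0 0 j * ρ 1 1 j + ρ 0 1 j * ρ 1 0 j +
        c 0 1 0 1 j j 0 / (γ 0 0 0 * γ 1 1 0) +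
        (1 / 2) * ρ 0 1 0 ^ 2 * (ρ 0 0 j ^ 2 + ρ 1 1 j ^ 2 + 2 * ρ 0 1 j ^ 2) -
        2 * ρ 0 1 0 * (ρ 0 0 j * ρ 1 0 j + ρ 0 1 j * ρ 1 1 j) +
        (1 / 4) * ρ 0 1 0 ^ 2 * (c 0 0 0 0 j j 0 / γ 0 0 0 ^ 2 +
          c 1 1 1 1 j j 0 / γ 1 1 0 ^ 2 + 2 * c 0 0 1 1 j j 0 / (γ 0 0 0 * γ 1 1 0)) -
        (ρ 0 1 0 / Real.sqrt (γ 0 0 0 * γ 1 1 0)) *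
          (c 0 1 0 0 j j 0 / γ 0 0 0 + c 0 1 1 1 j j 0 / γ 1 1 0))) :
    ρ 0 1 0 = 0 ∧
    τsq = ρ 0 0 0 * ρ 1 1 0 + 2 * ρ 0 0 1 * ρ 1 1 1 + 2 * ρ 0 1 1 * ρ 1 0 1 +
      ∑' j : ℤ, c 0 1 0 1 j j 0 / (γ 0 0 0 * γ 1 1 0) ∧
    ρ 0 0 0 * ρ 1 1 0 + 2 * ρ 0 0 1 * ρ 1 1 1 + 2 * ρ 0 1 1 * ρ 1 0 1 +
      (∑' j : ℤ, c 0 1 0 1 j j 0 / (γ 0 0 0 * γ 1 1 0)) =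
      1 + (η 0 - 3) / 9 + (η 1 - 3) / 9 :=
  ma1_crosscorrelation_limit_variance_general P e hmom hindep η hmean hvar hkurt X hX γ hγ ρ hρ c hc
    τsq hτ

end
end
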